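/- Fix an arbitrary infinite reference strand R over {A,C,G,T} containing infinitely many occurrences of each character, and let S be drawn uniformly from strings in {A,C,G,T}^n with no two consecutive equal characters. Then cost_R(S) stochastically dominates the sum of n i.i.d. random variables each uniform on {1,2,3}; in particular E[cost_R(S)] ≥ 2n. -/

import Mathlib

open Finset
open scoped Classical

noncomputable def refCost (R : ℕ → Fin 4) (S : List (Fin 4)) : ℕ :=
  sInf {m | S.Sublist ((List.range m).map R)}

/-- Strands of length n over {A,C,G,T} with no two consecutive equal characters. -/
def NoHomo (n : ℕ) : Type :=
  {S : Fin n → Fin 4 // List.Chain' (· ≠ ·) (List.ofFn S)}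

noncomputable instance (n : ℕ) : Fintype (NoHomo n) := by
  unfold NoHomo; infer_instance

/-!
Greedy printing is optimal, so `refCost R S` is the end of the greedy match. If the last printed
character is `prev` and the search resumes at `p`, the characters other than `prev` next occur in
`R` at pairwise different offsets `≥ 1` from `p`; sorted, these offsets are at least `1, …, m`
(with `m + 1` the alphabet size). Hence a uniformly chosen next character increases the cost by an
amount dominating a uniform variable on `{1, …, m}`, and by induction on the length the cost
dominates a sum of such uniforms. The first character, with `m + 1` choices whose offsets are at
least `1, …, m + 1`, does even better. Summing the tail bounds over all thresholds turns the
dominance into the bound on the mean, which for a sum of `n` uniforms on `{1, 2, 3}` is `2n`.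
-/

section Greedy

variable {α : Type*} (R : ℕ → α)

noncomputable def nextOcc (c : α) (p : ℕ) : ℕ :=
  sInf {q | p ≤ q ∧ R q = c}

/-- One past the position at which greedy printing of `L`, started at position `p` of `R`,
matches the last character of `L` (positions count from `0`). -/
noncomputable def greedyEnd : List α → ℕ → ℕ
  | [], p => p
  | c :: L, p => greedyEnd L (nextOcc R c p + 1)

variable {R}

theorem nextOcc_spec (hR : ∀ c, {i | R i = c}.Infinite) (c : α) (p : ℕ) :
    p ≤ nextOcc R c p ∧ R (nextOcc R c p) = c := by
  obtain ⟨q, hq, hpq⟩ := (hR c).exists_gt p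
  exact Nat.sInf_mem (s := {q | p ≤ q ∧ R q = c}) ⟨q, hpq.le, hq⟩

theorem nextOcc_le {c : α} {p q : ℕ} (hpq : p ≤ q) (hq : R q = c) : nextOcc R c p ≤ q :=
  Nat.sInf_le ⟨hpq, hq⟩

theorem nextOcc_self (p : ℕ) : nextOcc R (R p) p = p :=
  le_antisymm (nextOcc_le le_rfl rfl)
    (Nat.sInf_mem (⟨p, le_rfl, rfl⟩ : {q | p ≤ q ∧ R q = R p}.Nonempty)).1

theorem nextOcc_succ {c : α} {p : ℕ} (hc : R p ≠ c) : nextOcc R c p = nextOcc R c (p + 1) := by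
  refine congrArg sInf (Set.ext fun q =>
    ⟨fun ⟨hpq, hq⟩ => ⟨?_, hq⟩, fun ⟨hpq, hq⟩ => ⟨Nat.le_of_succ_le hpq, hq⟩⟩)
  exact lt_of_le_of_ne hpq (by rintro rfl; exact hc hq)

theorem nextOcc_sub_injective (hR : ∀ c, {i | R i = c}.Infinite) (p : ℕ) :
    Function.Injective fun c => nextOcc R c p - p := by
  intro a b hab
  have ha := nextOcc_spec hR a p
  have hb := nextOcc_spec hR b p
  rw [← ha.2, ← hb.2, show nextOcc R a p = nextOcc R b p by simp only at hab; omega]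

theorem le_greedyEnd (hR : ∀ c, {i | R i = c}.Infinite) :
    ∀ (L : List α) (p : ℕ), p ≤ greedyEnd R L p
  | [], _ => le_rfl
  | c :: L, p => ((nextOcc_spec hR c p).1.trans (Nat.le_succ _)).trans (le_greedyEnd hR L _)

theorem sublist_map_range'_iff (hR : ∀ c, {i | R i = c}.Infinite) :
    ∀ (k : ℕ) (L : List α) (p : ℕ),
      L.Sublist ((List.range' p k).map R) ↔ greedyEnd R L p ≤ p + k
  | 0, [], p => by simp [greedyEnd]
  | 0, c :: L, p => by
    have := (nextOcc_spec hR c p).1.trans_lt (Nat.lt_succ_self _)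
    simpa [greedyEnd] using this.trans_le (le_greedyEnd hR L _)
  | k + 1, [], p => by simp [greedyEnd]
  | k + 1, c :: L, p => by
    rw [List.range'_succ, List.map_cons, List.sublist_cons_iff,
      show p + (k + 1) = p + 1 + k by omega]
    by_cases hc : R p = c
    · subst hc
      rw [greedyEnd, nextOcc_self, ← sublist_map_range'_iff hR k L (p + 1)]
      constructor
      · rintro (h | ⟨r, hr, h⟩)
        exacts [(List.sublist_cons_self _ _).trans h, (List.cons_injective hr).symm ▸ h]
      · exact fun h => Or.inr ⟨L, rfl, h⟩
    · have hnext : greedyEnd R (c :: L) p = greedyEnd R (c :: L) (p + 1) := by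
        rw [greedyEnd, greedyEnd, nextOcc_succ hc]
      rw [hnext, ← sublist_map_range'_iff hR k (c :: L) (p + 1)]
      constructor
      · rintro (h | ⟨r, hr, h⟩)
        exacts [h, absurd (List.cons_eq_cons.1 hr).1 (Ne.symm hc)]
      · exact Or.inl

end Greedy

theorem refCost_eq_greedyEnd {R : ℕ → Fin 4} (hR : ∀ c, {i | R i = c}.Infinite)
    (L : List (Fin 4)) : refCost R L = greedyEnd R L 0 := by
  have hset : {m | L.Sublist ((List.range m).map R)} = Set.Ici (greedyEnd R L 0) := by
    ext m
    simp [List.range_eq_range', sublist_map_range'_iff hR]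
  rw [refCost, hset, csInf_Ici]

theorem sum_range_card_le_sum_of_monotone {M : Type*} [AddCommMonoid M] [PartialOrder M]
    [IsOrderedAddMonoid M] {g : ℕ → M} (hg : Monotone g) (s : Finset ℕ) :
    ∑ j ∈ range #s, g j ≤ ∑ x ∈ s, g x := by
  induction s using Finset.induction_on_max with
  | empty => simp
  | insert a s hlt ih =>
    have has : a ∉ s := fun h => lt_irrefl a (hlt a h)
    have hcard : #s ≤ a := by simpa using card_le_card fun x hx => mem_range.2 (hlt x hx)
    rw [card_insert_of_notMem has, sum_range_succ, sum_insert has, add_comm]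
    exact add_le_add (hg hcard) ih

theorem sum_range_card_le_sum_comp {ι M : Type*} [AddCommMonoid M] [PartialOrder M]
    [IsOrderedAddMonoid M] {s : Finset ι} {d : ι → ℕ} (hd : Set.InjOn d s) {g : ℕ → M}
    (hg : Monotone g) : ∑ j ∈ range #s, g j ≤ ∑ c ∈ s, g (d c) := by
  simpa [card_image_of_injOn hd, sum_image hd] using
    sum_range_card_le_sum_of_monotone hg (s.image d)

theorem card_filter_fun_fin_succ {α : Type*} [Fintype α] {k : ℕ}
    (P : (Fin (k + 1) → α) → Prop) [DecidablePred P] :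
    #{f | P f} = ∑ a, #{f : Fin k → α | P (Fin.cons a f)} := by
  simp only [card_filter]
  rw [← (Fin.consEquiv fun _ => α).sum_comp, Fintype.sum_prod_type]
  rfl

theorem sum_range_card_filter_lt {ι : Type*} [Fintype ι] (f : ι → ℕ) (T : ℕ) :
    ∑ t ∈ range T, #{i | t < f i} = ∑ i, min T (f i) := by
  simp only [card_filter]
  rw [sum_comm]
  refine sum_congr rfl fun i _ => ?_
  rw [← card_filter, show (range T).filter (· < f i) = range (min T (f i)) by ext; simp,
    card_range]

theorem sum_mul_card_le_of_forall_card_le {ι κ : Type*} [Fintype ι] [Fintype κ] {f : ι → ℕ}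
    {g : κ → ℕ}
    (h : ∀ t, #{i | t ≤ f i} * Fintype.card κ ≤ #{j | t ≤ g j} * Fintype.card ι) :
    (∑ i, f i) * Fintype.card κ ≤ (∑ j, g j) * Fintype.card ι := by
  set T := ∑ i, f i
  have hf : ∑ t ∈ range T, #{i | t < f i} = T := by
    rw [sum_range_card_filter_lt]
    exact sum_congr rfl fun i _ =>
      min_eq_right (single_le_sum (fun _ _ => Nat.zero_le _) (mem_univ i))
  calc T * Fintype.card κ = ∑ t ∈ range T, #{i | t + 1 ≤ f i} * Fintype.card κ := by
        conv_lhs => rw [← hf]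
        rw [sum_mul]; rfl
    _ ≤ ∑ t ∈ range T, #{j | t + 1 ≤ g j} * Fintype.card ι :=
        sum_le_sum fun t _ => h (t + 1)
    _ = (∑ j, min T (g j)) * Fintype.card ι := by
        rw [← sum_mul, ← sum_range_card_filter_lt]; rfl
    _ ≤ (∑ j, g j) * Fintype.card ι := by gcongr; exact min_le_right _ _

noncomputable def uniformSumTail (m k t : ℕ) : ℕ :=
  #{y : Fin k → Fin m | t ≤ ∑ i, ((y i : ℕ) + 1)}

theorem uniformSumTail_antitone (m k : ℕ) : Antitone (uniformSumTail m k) :=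
  fun _ _ h => card_le_card fun y hy => by
    simp only [mem_filter, mem_univ, true_and] at hy ⊢
    exact h.trans hy

theorem uniformSumTail_succ (m k t : ℕ) :
    uniformSumTail m (k + 1) t = ∑ j ∈ range m, uniformSumTail m k (t - (j + 1)) := by
  rw [uniformSumTail, card_filter_fun_fin_succ, ← Fin.sum_univ_eq_sum_range]
  refine sum_congr rfl fun v _ => congrArg card (filter_congr fun y _ => ?_)
  rw [Fin.sum_univ_succ, Fin.cons_zero]
  simp only [Fin.cons_succ]
  omega

theorem two_mul_sum_sum_val_add_one (m n : ℕ) :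
    2 * ∑ y : Fin n → Fin m, ∑ i, ((y i : ℕ) + 1) = m ^ n * (n * (m + 1)) := by
  let rev : (Fin n → Fin m) ≃ (Fin n → Fin m) := Equiv.piCongrRight fun _ => Fin.revPerm
  have hpair : ∀ y : Fin n → Fin m,
      ∑ i, ((y i : ℕ) + 1) + ∑ i, ((rev y i : ℕ) + 1) = n * (m + 1) := by
    intro y
    rw [← sum_add_distrib]
    calc _ = ∑ _i : Fin n, (m + 1) := sum_congr rfl fun i _ => by
          have := (y i).isLt
          show (y i : ℕ) + 1 + ((Fin.rev (y i) : ℕ) + 1) = m + 1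
          rw [Fin.val_rev]
          omega
      _ = n * (m + 1) := by simp
  calc 2 * ∑ y : Fin n → Fin m, ∑ i, ((y i : ℕ) + 1)
      = ∑ y : Fin n → Fin m, (∑ i, ((y i : ℕ) + 1) + ∑ i, ((rev y i : ℕ) + 1)) := by
        rw [sum_add_distrib, rev.sum_comp (fun y => ∑ i, ((y i : ℕ) + 1)), two_mul]
    _ = m ^ n * (n * (m + 1)) := by simp [hpair]

section Chains

variable {α : Type*} [Fintype α] [DecidableEq α] {R : ℕ → α}

variable (R) in
/-- The number of strands `S` of length `k` that may follow a character `prev` and whose greedy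
printing, started at position `p`, ends at least `t` positions later. -/
noncomputable def greedyTail (k t p : ℕ) (prev : α) : ℕ :=
  #{S : Fin k → α |
    (prev :: List.ofFn S).IsChain (· ≠ ·) ∧ p + t ≤ greedyEnd R (List.ofFn S) p}

theorem card_filter_cons_greedyEnd (hR : ∀ c, {i | R i = c}.Infinite) (k t p : ℕ) (c : α) :
    #{S : Fin k → α | (c :: List.ofFn S).IsChain (· ≠ ·) ∧
        p + t ≤ greedyEnd R (c :: List.ofFn S) p} =
      greedyTail R k (t - (nextOcc R c p - p + 1)) (nextOcc R c p + 1) c := by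
  refine congrArg card (filter_congr fun S _ => and_congr_right fun _ => ?_)
  have := (nextOcc_spec hR c p).1
  have := le_greedyEnd hR (List.ofFn S) (nextOcc R c p + 1)
  rw [greedyEnd]
  omega

theorem greedyTail_succ (hR : ∀ c, {i | R i = c}.Infinite) (k t p : ℕ) (prev : α) :
    greedyTail R (k + 1) t p prev =
      ∑ c ∈ univ.erase prev,
        greedyTail R k (t - (nextOcc R c p - p + 1)) (nextOcc R c p + 1) c := by
  rw [greedyTail, card_filter_fun_fin_succ, ← sum_erase_add _ _ (mem_univ prev)]
  simp only [List.ofFn_succ, Fin.cons_zero, Fin.cons_succ, List.isChain_cons_cons, ne_eq,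
    not_true_eq_false, false_and, filter_false, card_empty, add_zero]
  refine sum_congr rfl fun c hc => ?_
  rw [← card_filter_cons_greedyEnd hR]
  simp [Ne.symm (ne_of_mem_erase hc)]

theorem uniformSumTail_le_greedyTail (hR : ∀ c, {i | R i = c}.Infinite) {m : ℕ}
    (hm : Fintype.card α = m + 1) :
    ∀ k t p prev, uniformSumTail m k t ≤ greedyTail R k t p prev
  | 0, t, p, prev => by
    simp [uniformSumTail, greedyTail, List.ofFn_zero, greedyEnd, apply_ite card]
  | k + 1, t, p, prev => by
    have hmono : Monotone fun j => uniformSumTail m k (t - (j + 1)) :=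
      fun i j hij => uniformSumTail_antitone m k (by omega)
    have hsorted :=
      sum_range_card_le_sum_comp (s := univ.erase prev) (nextOcc_sub_injective hR p).injOn hmono
    rw [card_erase_of_mem (mem_univ _), card_univ, hm, Nat.add_sub_cancel] at hsorted
    rw [uniformSumTail_succ, greedyTail_succ hR]
    exact hsorted.trans (sum_le_sum fun c _ => uniformSumTail_le_greedyTail hR hm k _ _ _)

theorem uniformSumTail_succ_mul_le (hR : ∀ c, {i | R i = c}.Infinite) {m : ℕ}
    (hm : Fintype.card α = m + 1) (k t : ℕ) :
    uniformSumTail m (k + 1) t * (m + 1) ≤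
      #{f : Fin (k + 1) → α |
        (List.ofFn f).IsChain (· ≠ ·) ∧ t ≤ greedyEnd R (List.ofFn f) 0} * m := by
  set g := fun j => uniformSumTail m k (t - (j + 1))
  have hmono : Monotone g := fun i j hij => uniformSumTail_antitone m k (by omega)
  have hfirst : ∑ j ∈ range (m + 1), g j ≤
      #{f : Fin (k + 1) → α |
        (List.ofFn f).IsChain (· ≠ ·) ∧ t ≤ greedyEnd R (List.ofFn f) 0} := by
    have hsorted :=
      sum_range_card_le_sum_comp (s := univ) (nextOcc_sub_injective hR 0).injOn hmono
    rw [card_univ, hm] at hsorted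
    refine hsorted.trans (le_of_le_of_eq (sum_le_sum fun c _ =>
      uniformSumTail_le_greedyTail hR hm k _ (nextOcc R c 0 + 1) c) ?_)
    rw [card_filter_fun_fin_succ]
    refine sum_congr rfl fun c _ => ?_
    rw [← card_filter_cons_greedyEnd hR]
    simp
  have hlast : ∑ j ∈ range m, g j ≤ m * g m := by
    simpa using sum_le_sum fun j hj => hmono (mem_range.1 hj).le
  rw [uniformSumTail_succ]
  calc (∑ j ∈ range m, g j) * (m + 1)
        = (∑ j ∈ range m, g j) * m + ∑ j ∈ range m, g j := by ring
    _ ≤ (∑ j ∈ range m, g j) * m + m * g m := by gcongr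
    _ = (∑ j ∈ range (m + 1), g j) * m := by rw [sum_range_succ]; ring
    _ ≤ _ := Nat.mul_le_mul_right _ hfirst

theorem card_isChain_cons {m : ℕ} (hm : Fintype.card α = m + 1) :
    ∀ (k : ℕ) (prev : α),
      #{S : Fin k → α | (prev :: List.ofFn S).IsChain (· ≠ ·)} = m ^ k
  | 0, prev => by simp
  | k + 1, prev => by
    rw [card_filter_fun_fin_succ, ← sum_erase_add _ _ (mem_univ prev)]
    simp only [List.ofFn_succ, Fin.cons_zero, Fin.cons_succ, List.isChain_cons_cons, ne_eq,
      not_true_eq_false, false_and, filter_false, card_empty, add_zero]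
    calc _ = ∑ c ∈ univ.erase prev, m ^ k := sum_congr rfl fun c hc => by
            simpa [Ne.symm (ne_of_mem_erase hc)] using card_isChain_cons hm k c
      _ = m ^ (k + 1) := by simp [hm, pow_succ, mul_comm]

theorem card_isChain_succ {m : ℕ} (hm : Fintype.card α = m + 1) (k : ℕ) :
    #{f : Fin (k + 1) → α | (List.ofFn f).IsChain (· ≠ ·)} = (m + 1) * m ^ k := by
  rw [card_filter_fun_fin_succ]
  simp [card_isChain_cons hm, hm]

theorem uniformSumTail_mul_card_isChain_le (hR : ∀ c, {i | R i = c}.Infinite) {m : ℕ}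
    (hm : Fintype.card α = m + 1) (n t : ℕ) :
    uniformSumTail m n t * #{f : Fin n → α | (List.ofFn f).IsChain (· ≠ ·)} ≤
      #{f : Fin n → α |
        (List.ofFn f).IsChain (· ≠ ·) ∧ t ≤ greedyEnd R (List.ofFn f) 0} * m ^ n := by
  cases n with
  | zero => simp [uniformSumTail, greedyEnd, apply_ite card]
  | succ k =>
    calc uniformSumTail m (k + 1) t * #{f : Fin (k + 1) → α | (List.ofFn f).IsChain (· ≠ ·)}
        = uniformSumTail m (k + 1) t * (m + 1) * m ^ k := by rw [card_isChain_succ hm]; ring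
      _ ≤ _ * m * m ^ k := Nat.mul_le_mul_right _ (uniformSumTail_succ_mul_le hR hm k t)
      _ = _ := by ring

end Chains

theorem card_noHomo (n : ℕ) :
    Fintype.card (NoHomo n) = #{f : Fin n → Fin 4 | (List.ofFn f).IsChain (· ≠ ·)} := by
  rw [← Fintype.card_subtype]
  exact Fintype.card_congr (Equiv.refl _)

theorem card_filter_noHomo (n : ℕ) (P : (Fin n → Fin 4) → Prop) [DecidablePred P] :
    #{S : NoHomo n | P S.1} =
      #{f : Fin n → Fin 4 | (List.ofFn f).IsChain (· ≠ ·) ∧ P f} := by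
  simp only [← Fintype.card_subtype]
  exact Fintype.card_congr
    (Equiv.subtypeSubtypeEquivSubtypeInter (fun f => (List.ofFn f).IsChain (· ≠ ·)) P)

/-- For any infinite reference strand R containing each character infinitely
often, the cost of a uniformly random strand without homopolymers
stochastically dominates a sum of n i.i.d. uniforms on {1,2,3} (expressed by
cross-multiplied counts over the two uniform sample spaces), and in particular
E[cost] ≥ 2n. -/
theorem stmt11 (n : ℕ) (R : ℕ → Fin 4) (hR : ∀ c : Fin 4, {i : ℕ | R i = c}.Infinite) :
    (∀ t : ℕ,
      (Finset.univ.filter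
        (fun y : Fin n → Fin 3 => t ≤ ∑ i, ((y i : ℕ) + 1))).card
          * Fintype.card (NoHomo n)
      ≤ (Finset.univ.filter
        (fun S : NoHomo n => t ≤ refCost R (List.ofFn S.1))).card * 3 ^ n) ∧
    2 * n * Fintype.card (NoHomo n) ≤ ∑ S : NoHomo n, refCost R (List.ofFn S.1) := by
  have hdom : ∀ t, uniformSumTail 3 n t * Fintype.card (NoHomo n) ≤
      #{S : NoHomo n | t ≤ refCost R (List.ofFn S.1)} * 3 ^ n := fun t => by
    rw [card_noHomo, card_filter_noHomo (P := fun f => t ≤ refCost R (List.ofFn f))]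
    simpa only [refCost_eq_greedyEnd hR] using
      uniformSumTail_mul_card_isChain_le hR (Fintype.card_fin 4) n t
  refine ⟨hdom, Nat.le_of_mul_le_mul_right ?_ (pow_pos three_pos n)⟩
  have hmean := sum_mul_card_le_of_forall_card_le
    (f := fun y : Fin n → Fin 3 => ∑ i, ((y i : ℕ) + 1))
    (g := fun S : NoHomo n => refCost R (List.ofFn S.1)) fun t => (hdom t).trans_eq (by simp)
  have hsum : ∑ y : Fin n → Fin 3, ∑ i, ((y i : ℕ) + 1) = 2 * n * 3 ^ n := by
    linarith [two_mul_sum_sum_val_add_one 3 n]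
  simp only [hsum, Fintype.card_fun, Fintype.card_fin] at hmean
  linarith
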